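/- Let n ≥ 2k+1 and S = {0,1,...,t} for some t with 0 ≤ t ≤ k−1. Then the Grundy domination number of the generalized Kneser graph J_S(n,k) from Z-Grundy sequences satisfies γ_gr^Z(J_S(n,k)) ≤ C(2k−2t, k−t), and consequently Z(J_S(n,k)) ≥ C(n,k) − C(2k−2t, k−t). -/

import Mathlib

section ZFCoreSection
open Polynomial Finset
namespace ZFCore

/-- index type for the 2c × 2c matrix -/
abbrev Idx (c : ℕ) := Fin c ⊕ Fin c

def idxVal {c : ℕ} : Idx c → ℕ := Sum.elim (fun j => (j : ℕ)) (fun j => c + (j : ℕ))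

section Defs

variable {F : Type*} [CommRing F] {N : ℕ}

/-- the row of truncated coefficients of `X^j * p` -/
noncomputable def rowFam (c t : ℕ) (p : F[X]) (j : Fin c) : Idx c → F :=
  fun r => (X ^ (j : ℕ) * p).coeff (t + idxVal r)

noncomputable def pairFam (c t : ℕ) (p q : F[X]) : Idx c → Idx c → F :=
  Sum.elim (rowFam c t p) (rowFam c t q)

noncomputable def detP (c t : ℕ) (p q : F[X]) : F :=
  Matrix.det (Matrix.of (pairFam c t p q))

/-- reconstruct a polynomial of small degree from a vector -/
noncomputable def vpoly (c : ℕ) (v : Fin c → F) : F[X] :=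
  ∑ j : Fin c, C (v j) * X ^ (j : ℕ)

lemma vpoly_coeff (c : ℕ) (v : Fin c → F) (j0 : Fin c) :
    (vpoly c v).coeff (j0 : ℕ) = v j0 := by
  rw [vpoly, finset_sum_coeff]
  rw [Finset.sum_eq_single j0]
  · simp
  · intro b _ hb
    rw [coeff_C_mul, coeff_X_pow, if_neg (by simpa using fun h => hb (Fin.ext h.symm))]
    simp
  · simp

lemma vpoly_natDegree_lt (c : ℕ) (hc : 0 < c) (v : Fin c → F) :
    (vpoly c v).natDegree < c := by
  have : (vpoly c v).natDegree ≤ c - 1 := by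
    apply natDegree_sum_le_of_forall_le
    intro i _
    exact le_trans (natDegree_C_mul_X_pow_le _ _) (by omega)
  omega

lemma vpoly_eq (c : ℕ) (f : F[X]) (hf : f.natDegree < c) :
    vpoly c (fun j => f.coeff (j : ℕ)) = f := by
  conv_rhs => rw [f.as_sum_range' c hf]
  rw [vpoly, Fin.sum_univ_eq_sum_range (fun j => C (f.coeff j) * X ^ j)]
  exact Finset.sum_congr rfl fun i _ => C_mul_X_pow_eq_monomial

/-- a linear combination of the rows is a coefficient of a polynomial combination -/
lemma vecMul_pairFam (c t : ℕ) (p q : F[X]) (v : Idx c → F) (r : Idx c) :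
    Matrix.vecMul v (Matrix.of (pairFam c t p q)) r
      = (vpoly c (fun j => v (Sum.inl j)) * p
          + vpoly c (fun j => v (Sum.inr j)) * q).coeff (t + idxVal r) := by
  rw [Matrix.vecMul, dotProduct, Fintype.sum_sum_type]
  rw [coeff_add, vpoly, vpoly, Finset.sum_mul, Finset.sum_mul, finset_sum_coeff,
    finset_sum_coeff]
  congr 1 <;>
  · apply Finset.sum_congr rfl
    intro j _
    rw [mul_assoc, coeff_C_mul]
    rfl

noncomputable def polyOf (α : Fin N → F) (A : Finset (Fin N)) : F[X] :=
  ∏ i ∈ A, (X - C (α i))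

lemma polyOf_monic (α : Fin N → F) (A : Finset (Fin N)) : (polyOf α A).Monic :=
  monic_prod_of_monic _ _ fun i _ => monic_X_sub_C (α i)

lemma polyOf_natDegree [Nontrivial F] (α : Fin N → F) (A : Finset (Fin N)) :
    (polyOf α A).natDegree = A.card := by
  rw [polyOf, natDegree_prod_of_monic _ _ fun i _ => monic_X_sub_C (α i)]
  simp

/-- Functoriality of `detP ∘ polyOf` under ring maps. -/
lemma detP_polyOf_map {F' : Type*} [CommRing F'] (φ : F →+* F') (c t : ℕ)
    (α : Fin N → F) (A B : Finset (Fin N)) :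
    detP c t (polyOf (fun i => φ (α i)) A) (polyOf (fun i => φ (α i)) B)
      = φ (detP c t (polyOf α A) (polyOf α B)) := by
  rw [detP, detP, RingHom.map_det, RingHom.mapMatrix_apply]
  congr 1
  have hmap : ∀ (S : Finset (Fin N)), polyOf (fun i => φ (α i)) S = (polyOf α S).map φ := by
    intro S
    rw [polyOf, polyOf, Polynomial.map_prod]
    exact Finset.prod_congr rfl fun i _ => by simp
  funext r j
  have key : ∀ p : F[X], ∀ j1 : Fin c, (X ^ (j1:ℕ) * p.map φ).coeff (t + idxVal j)
      = φ ((X ^ (j1:ℕ) * p).coeff (t + idxVal j)) := by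
    intro p j1
    rw [← Polynomial.coeff_map, Polynomial.map_mul, Polynomial.map_pow, Polynomial.map_X]
  rcases r with j1 | j1 <;>
    simp only [Matrix.map_apply, Matrix.of_apply, pairFam, Sum.elim_inl, Sum.elim_inr, rowFam,
      hmap, key]

end Defs

section FieldLemmas

variable {F : Type*} [Field F] {N : ℕ}

/-- L1 : if there is a small nontrivial relation `f * p = g * q` then the determinant is 0. -/
lemma detP_eq_zero (c t : ℕ) (p q f g : F[X]) (hf : f.natDegree < c)
    (hg : g.natDegree < c) (hf0 : f ≠ 0) (h : f * p = g * q) :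
    detP c t p q = 0 := by
  rw [detP, ← Matrix.exists_vecMul_eq_zero_iff]
  refine ⟨Sum.elim (fun j => f.coeff (j : ℕ)) (fun j => - g.coeff (j : ℕ)), ?_, ?_⟩
  · intro hv
    apply leadingCoeff_ne_zero.mpr hf0
    have := congrFun hv (Sum.inl ⟨f.natDegree, hf⟩)
    simpa using this
  · funext r
    rw [vecMul_pairFam]
    have h1 : vpoly c (fun j => Sum.elim (fun j : Fin c => f.coeff (j : ℕ))
        (fun j : Fin c => - g.coeff (j : ℕ)) (Sum.inl j)) = f := vpoly_eq c f hf
    have h2 : vpoly c (fun j => Sum.elim (fun j : Fin c => f.coeff (j : ℕ))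
        (fun j : Fin c => - g.coeff (j : ℕ)) (Sum.inr j)) = -g := by
      rw [show (fun j => Sum.elim (fun j : Fin c => f.coeff (j : ℕ))
        (fun j : Fin c => - g.coeff (j : ℕ)) (Sum.inr j)) = fun j : Fin c => (-g).coeff (j : ℕ)
        from funext fun j => by simp, vpoly_eq c (-g) (by simpa using hg)]
    rw [h1, h2]
    rw [neg_mul, ← h]
    simp

/-- L2 core : nondegeneracy for split polynomials with coprime parts. -/
lemma detP_ne_zero (c t : ℕ) (hc : 0 < c) (a b : F[X])
    (ha : a.natDegree = c) (hb : b.natDegree = c) (hmb : b.Monic)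
    (hcop : IsCoprime a b) :
    detP c t (X ^ t * a) (X ^ t * b) ≠ 0 := by
  rw [detP]
  intro h0
  obtain ⟨v, hv0, hvm⟩ := (Matrix.exists_vecMul_eq_zero_iff).mpr h0
  set f := vpoly c (fun j => v (Sum.inl j)) with hfdef
  set g := vpoly c (fun j => v (Sum.inr j)) with hgdef
  have hcoeff : ∀ r : Idx c, (f * a + g * b).coeff (idxVal r) = 0 := by
    intro r
    have := congrFun hvm r
    rw [vecMul_pairFam] at this
    have harr : f * (X ^ t * a) + g * (X ^ t * b) = X ^ t * (f * a + g * b) := by ring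
    rwa [harr, add_comm t (idxVal r), coeff_X_pow_mul] at this
  have hfg : f * a + g * b = 0 := by
    ext m
    rcases lt_or_ge m (c + c) with hm | hm
    · rcases lt_or_ge m c with hm1 | hm1
      · simpa [idxVal] using hcoeff (Sum.inl ⟨m, hm1⟩)
      · have := hcoeff (Sum.inr ⟨m - c, by omega⟩)
        rwa [show idxVal (Sum.inr ⟨m - c, by omega⟩ : Idx c) = m by
          simp [idxVal]; omega] at this
    · rw [coeff_zero]
      apply coeff_eq_zero_of_natDegree_lt
      have h1 : (f * a).natDegree < c + c := by
        apply lt_of_le_of_lt (natDegree_mul_le)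
        have h3 := vpoly_natDegree_lt c hc (fun j => v (Sum.inl j))
        rw [← hfdef] at h3
        omega
      have h2 : (g * b).natDegree < c + c := by
        apply lt_of_le_of_lt (natDegree_mul_le)
        have h3 := vpoly_natDegree_lt c hc (fun j => v (Sum.inr j))
        rw [← hgdef] at h3
        omega
      have := natDegree_add_le (f * a) (g * b)
      omega
  have hdvd : b ∣ f * a := ⟨-g, by linear_combination hfg⟩
  have hf0 : f = 0 := by
    by_contra hf0
    have := Polynomial.natDegree_le_of_dvd (hcop.symm.dvd_of_dvd_mul_right hdvd) hf0
    have h4 := vpoly_natDegree_lt c hc (fun j => v (Sum.inl j))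
    rw [← hfdef] at h4
    omega
  have hg0 : g = 0 := by
    rw [hf0, zero_mul, zero_add] at hfg
    rcases mul_eq_zero.mp hfg with h | h
    · exact h
    · exact absurd h hmb.ne_zero
  apply hv0
  funext r
  rcases r with j | j
  · have := vpoly_coeff c (fun j => v (Sum.inl j)) j
    rw [← hfdef, hf0] at this
    simpa using this.symm
  · have := vpoly_coeff c (fun j => v (Sum.inr j)) j
    rw [← hgdef, hg0] at this
    simpa using this.symm

/-- Vanishing: if the pair intersects in more than `t` points, the determinant vanishes. -/
lemma detP_polyOf_eq_zero (k t : ℕ) (ht : t < k) (α : Fin N → F)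
    (A B : Finset (Fin N)) (hA : A.card = k) (hB : B.card = k)
    (hint : t + 1 ≤ (A ∩ B).card) :
    detP (k - t) t (polyOf α A) (polyOf α B) = 0 := by
  obtain ⟨I, hIsub, hIcard⟩ := Finset.exists_subset_card_eq hint
  have hIA : I ⊆ A := hIsub.trans inter_subset_left
  have hIB : I ⊆ B := hIsub.trans inter_subset_right
  apply detP_eq_zero (k - t) t _ _ (polyOf α (B \ I)) (polyOf α (A \ I))
  · rw [polyOf_natDegree, card_sdiff_of_subset hIB, hB, hIcard]; omega
  · rw [polyOf_natDegree, card_sdiff_of_subset hIA, hA, hIcard]; omega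
  · exact (polyOf_monic α _).ne_zero
  · have h1 : polyOf α (B \ I) * polyOf α A * polyOf α I
        = polyOf α (A \ I) * polyOf α B * polyOf α I := by
      simp only [polyOf]
      rw [mul_comm (∏ i ∈ B \ I, (X - C (α i))) _, mul_assoc, Finset.prod_sdiff hIB]
      rw [mul_comm (∏ i ∈ A \ I, (X - C (α i))) _, mul_assoc, Finset.prod_sdiff hIA]
      ring
    exact mul_right_cancel₀ (polyOf_monic α I).ne_zero h1

/-- Nondegeneracy over ℚ for a good witness valuation. -/
lemma detP_polyOf_witness (k t : ℕ) (ht : t < k) {N : ℕ}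
    (A B : Finset (Fin N)) (hA : A.card = k) (hB : B.card = k)
    (hint : (A ∩ B).card ≤ t) :
    ∃ w : Fin N → ℚ,
      detP (k - t) t (polyOf w A) (polyOf w B) ≠ 0 := by
  classical
  have hiA := Finset.card_inter_add_card_sdiff A B
  have hiB := Finset.card_inter_add_card_sdiff B A
  have h1 : t - (A ∩ B).card ≤ (A \ B).card := by
    rw [Finset.inter_comm B A] at hiB; omega
  have h2 : t - (A ∩ B).card ≤ (B \ A).card := by
    rw [Finset.inter_comm B A] at hiB; omega
  obtain ⟨PA, hPAs, hPAc⟩ := Finset.exists_subset_card_eq h1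
  obtain ⟨PB, hPBs, hPBc⟩ := Finset.exists_subset_card_eq h2
  set ZA := (A ∩ B) ∪ PA with hZA
  set ZB := (A ∩ B) ∪ PB with hZB
  have hZAcard : ZA.card = t := by
    rw [hZA, card_union_of_disjoint, hPAc]
    · omega
    · exact Finset.disjoint_left.mpr fun x hx hx2 =>
        (Finset.mem_sdiff.mp (hPAs hx2)).2 (Finset.mem_inter.mp hx).2
  have hZBcard : ZB.card = t := by
    rw [hZB, card_union_of_disjoint, hPBc]
    · omega
    · exact Finset.disjoint_left.mpr fun x hx hx2 =>
        (Finset.mem_sdiff.mp (hPBs hx2)).2 (Finset.mem_inter.mp hx).1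
  have hZAA : ZA ⊆ A := Finset.union_subset inter_subset_left
    (hPAs.trans sdiff_subset)
  have hZBB : ZB ⊆ B := Finset.union_subset inter_subset_right
    (hPBs.trans sdiff_subset)
  set w : Fin N → ℚ := fun i => if i ∈ (A \ ZA) ∪ (B \ ZB) then (i : ℕ) + 1 else 0 with hw
  refine ⟨w, ?_⟩
  -- w vanishes on ZA and ZB
  have hwZA : ∀ i ∈ ZA, w i = 0 := by
    intro i hi
    rw [hw]
    simp only [Finset.mem_union, Finset.mem_sdiff]
    rw [if_neg]
    rintro (⟨-, h⟩ | ⟨hiB, hnB⟩)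
    · exact h hi
    · rcases Finset.mem_union.mp hi with h | h
      · exact hnB (Finset.mem_union_left _ h)
      · exact (Finset.mem_sdiff.mp (hPAs h)).2 hiB
  have hwZB : ∀ i ∈ ZB, w i = 0 := by
    intro i hi
    rw [hw]
    simp only [Finset.mem_union, Finset.mem_sdiff]
    rw [if_neg]
    rintro (⟨hiA2, hnA⟩ | ⟨-, h⟩)
    · rcases Finset.mem_union.mp hi with h2 | h2
      · exact hnA (Finset.mem_union_left _ h2)
      · exact (Finset.mem_sdiff.mp (hPBs h2)).2 hiA2
    · exact h hi
  -- split the polynomials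
  have hsplit : ∀ (S Z : Finset (Fin N)), Z ⊆ S → (∀ i ∈ Z, w i = 0) → Z.card = t →
      polyOf w S = X ^ t * polyOf w (S \ Z) := by
    intro S Z hZS hw0 hZc
    rw [polyOf, polyOf, ← Finset.prod_sdiff hZS]
    rw [mul_comm]
    congr 1
    rw [← hZc, ← Finset.prod_const]
    exact Finset.prod_congr rfl fun i hi => by rw [hw0 i hi, map_zero, sub_zero]
  rw [hsplit A ZA hZAA hwZA hZAcard, hsplit B ZB hZBB hwZB hZBcard]
  apply detP_ne_zero _ _ (by omega)
  · rw [polyOf_natDegree, card_sdiff_of_subset hZAA, hA, hZAcard]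
  · rw [polyOf_natDegree, card_sdiff_of_subset hZBB, hB, hZBcard]
  · exact polyOf_monic _ _
  · -- coprimality: distinct nonzero roots
    rw [polyOf, polyOf]
    apply IsCoprime.prod_left
    intro i hi
    apply IsCoprime.prod_right
    intro j hj
    apply Polynomial.isCoprime_X_sub_C_of_isUnit_sub
    have hij : i ≠ j := by
      rintro rfl
      have hiA3 : i ∈ A := (Finset.mem_sdiff.mp hi).1
      have hiB3 : i ∈ B := (Finset.mem_sdiff.mp hj).1
      have : i ∈ ZA := Finset.mem_union_left _ (Finset.mem_inter.mpr ⟨hiA3, hiB3⟩)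
      exact (Finset.mem_sdiff.mp hi).2 this
    have hwi : w i = (i : ℕ) + 1 := by
      rw [hw]; exact if_pos (Finset.mem_union_left _ hi)
    have hwj : w j = (j : ℕ) + 1 := by
      rw [hw]; exact if_pos (Finset.mem_union_right _ hj)
    rw [hwi, hwj]
    apply IsUnit.of_mul_eq_one (((i:ℕ):ℚ) + 1 - (((j:ℕ):ℚ)+1))⁻¹
    apply mul_inv_cancel₀
    intro hcon
    rw [sub_eq_zero] at hcon
    have h5 : ((i:ℕ) : ℚ) = ((j:ℕ):ℚ) := by linarith
    exact hij (Fin.ext (by exact_mod_cast h5))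

end FieldLemmas

section Generic

/-- ground ring and generic field -/
abbrev RR (N : ℕ) := MvPolynomial (Fin N) ℚ

abbrev FF (N : ℕ) := FractionRing (RR N)

noncomputable def gena (N : ℕ) : Fin N → FF N :=
  fun i => algebraMap (RR N) (FF N) (MvPolynomial.X i)

lemma detP_gena_ne_zero (N k t : ℕ) (ht : t < k) (A B : Finset (Fin N))
    (hA : A.card = k) (hB : B.card = k) (hint : (A ∩ B).card ≤ t) :
    detP (k - t) t (polyOf (gena N) A) (polyOf (gena N) B) ≠ 0 := by
  obtain ⟨w, hw⟩ := detP_polyOf_witness k t ht A B hA hB hint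
  set Ψ : RR N →+* ℚ := (MvPolynomial.aeval w).toRingHom with hΨ
  set dR := detP (k - t) t (polyOf (fun i => (MvPolynomial.X i : RR N)) A)
      (polyOf (fun i => (MvPolynomial.X i : RR N)) B) with hdR
  have h1 : detP (k - t) t (polyOf w A) (polyOf w B) = Ψ dR := by
    rw [hdR, ← detP_polyOf_map Ψ]
    have : (fun i => Ψ (MvPolynomial.X i)) = w := by
      funext i; simp [hΨ]
    rw [this]
  have hdR0 : dR ≠ 0 := by
    intro h
    rw [h1, h, map_zero] at hw
    exact hw rfl
  have h2 : detP (k - t) t (polyOf (gena N) A) (polyOf (gena N) B)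
      = algebraMap (RR N) (FF N) dR := by
    rw [hdR, ← detP_polyOf_map (algebraMap (RR N) (FF N))]
    rfl
  rw [h2]
  intro h
  exact hdR0 (IsFractionRing.injective (RR N) (FF N) (by rw [h, map_zero]))

end Generic


section Alt

variable {F : Type*} [Field F] {c : ℕ}

/-- fix the first `c` arguments of an alternating map on `Idx c` indices -/
noncomputable def sumElimAlt (D : (Idx c → F) [⋀^Idx c]→ₗ[F] F)
    (P : Fin c → (Idx c → F)) : (Idx c → F) [⋀^Fin c]→ₗ[F] F where
  toFun Q := D (Sum.elim P Q)
  map_update_add' Q i x y := by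
    rw [Sum.elim_update_right, Sum.elim_update_right, Sum.elim_update_right]
    exact D.map_update_add _ _ _ _
  map_update_smul' Q i r x := by
    rw [Sum.elim_update_right, Sum.elim_update_right]
    exact D.map_update_smul _ _ _ _
  map_eq_zero_of_eq' Q i j heq hne :=
    D.map_eq_zero_of_eq (Sum.elim P Q) (i := Sum.inr i) (j := Sum.inr j)
      (by simpa using heq) (by simpa using hne)

@[simp] lemma sumElimAlt_apply (D : (Idx c → F) [⋀^Idx c]→ₗ[F] F)
    (P Q : Fin c → (Idx c → F)) : sumElimAlt D P Q = D (Sum.elim P Q) := rfl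

/-- canonical tuple enumerating a `c`-subset of `Idx c` -/
noncomputable def tupleOf (S : Finset (Idx c)) (hS : S.card = c) : Fin c → (Idx c → F) :=
  fun j => Pi.single ((S.equivFin.symm (Fin.cast hS.symm j) : Idx c)) 1

/-- an alternating map vanishing on all canonical basis tuples is zero -/
lemma alt_eq_zero_of_vanish (φ : (Idx c → F) [⋀^Fin c]→ₗ[F] F)
    (h : ∀ S : Finset (Idx c), ∀ hS : S.card = c, φ (tupleOf S hS) = 0) : φ = 0 := by
  classical
  have hM : φ.toMultilinearMap
      = (0 : (Idx c → F) [⋀^Fin c]→ₗ[F] F).toMultilinearMap := by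
    apply Module.Basis.ext_multilinear (fun _ => Pi.basisFun F (Idx c))
    intro v
    simp only [AlternatingMap.coe_multilinearMap, AlternatingMap.zero_apply]
    by_cases hv : Function.Injective v
    · set S := Finset.image v Finset.univ with hSdef
      have hcard : S.card = c := by
        rw [hSdef, Finset.card_image_of_injective _ hv, Finset.card_univ, Fintype.card_fin]
      have hmem : ∀ i, v i ∈ S := fun i => Finset.mem_image_of_mem v (Finset.mem_univ i)
      set σ0 : Fin c → Fin c := fun i => Fin.cast hcard (S.equivFin ⟨v i, hmem i⟩) with hσ0
      have hσinj : Function.Injective σ0 := by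
        intro i j hij
        apply hv
        rw [hσ0] at hij
        have := S.equivFin.injective (Fin.cast_injective _ hij)
        exact Subtype.ext_iff.mp this
      let σ : Equiv.Perm (Fin c) := Equiv.ofBijective σ0 (Finite.injective_iff_bijective.mp hσinj)
      have hcomp : (tupleOf S hcard : Fin c → (Idx c → F)) ∘ σ
          = fun i => Pi.basisFun F (Idx c) (v i) := by
        funext i
        have h1 : (S.equivFin.symm (Fin.cast hcard.symm (σ i)) : Idx c) = v i := by
          show (S.equivFin.symm (Fin.cast hcard.symm (σ0 i)) : Idx c) = v i
          rw [hσ0]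
          simp
        simp only [Function.comp_apply, tupleOf, h1, Pi.basisFun_apply]
      calc φ (fun i => Pi.basisFun F (Idx c) (v i))
          = φ ((tupleOf S hcard : Fin c → (Idx c → F)) ∘ σ) := by rw [hcomp]
        _ = Equiv.Perm.sign σ • φ (tupleOf S hcard) := φ.map_perm _ _
        _ = 0 := by rw [h S hcard]; simp
    · obtain ⟨i, j, hval, hne⟩ := Function.not_injective_iff.mp hv
      exact φ.map_eq_zero_of_eq _ (by rw [hval]) hne
  ext v
  exact DFunLike.congr_fun hM v

end Alt

lemma altMap_sum_apply {F : Type*} [Field F] {c : ℕ} {ι' : Type*} (s : Finset ι')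
    (f : ι' → ((Idx c → F) [⋀^Fin c]→ₗ[F] F)) (v : Fin c → (Idx c → F)) :
    (∑ j ∈ s, f j) v = ∑ j ∈ s, f j v := by
  induction s using Finset.cons_induction with
  | empty => simp
  | cons a s ha ih => rw [Finset.sum_cons, Finset.sum_cons, AlternatingMap.add_apply, ih]

/-- The skew Bollobás-type theorem of Frankl. -/
theorem skewBollobas {N m k t : ℕ} (ht : t < k)
    (A B : Fin m → Finset (Fin N))
    (hA : ∀ i, (A i).card = k) (hB : ∀ i, (B i).card = k)
    (hdiag : ∀ i, ((A i) ∩ (B i)).card ≤ t)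
    (hskew : ∀ i j, i < j → t + 1 ≤ ((A i) ∩ (B j)).card) :
    m ≤ (2 * (k - t)).choose (k - t) := by
  classical
  set c := k - t with hc
  set F := FF N
  set α := gena N with hα
  set P : Fin m → Fin c → (Idx c → F) := fun i => rowFam c t (polyOf α (A i)) with hP
  set Q : Fin m → Fin c → (Idx c → F) := fun i => rowFam c t (polyOf α (B i)) with hQ
  set φ : Fin m → ((Idx c → F) [⋀^Fin c]→ₗ[F] F) :=
    fun i => sumElimAlt Matrix.detRowAlternating (P i) with hφ
  have hφQ : ∀ i j, φ i (Q j) = detP c t (polyOf α (A i)) (polyOf α (B j)) := fun i j => rfl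
  have hvanish : ∀ i j : Fin m, j < i → φ j (Q i) = 0 := by
    intro i j hji
    rw [hφQ]
    exact detP_polyOf_eq_zero k t ht α _ _ (hA j) (hB i) (hskew j i hji)
  have hdiag' : ∀ i, φ i (Q i) ≠ 0 := by
    intro i
    rw [hφQ]
    exact detP_gena_ne_zero N k t ht _ _ (hA i) (hB i) (hdiag i)
  set ψ : Fin m → ({S : Finset (Idx c) // S.card = c} → F) :=
    fun i S => φ i (tupleOf S.1 S.2) with hψ
  have hli : LinearIndependent F ψ := by
    rw [Fintype.linearIndependent_iff]
    intro g hg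
    suffices H : ∀ Nn : ℕ, ∀ i : Fin m, m - Nn ≤ (i : ℕ) → g i = 0 by
      intro i; exact H m i (by omega)
    intro Nn
    induction Nn with
    | zero => intro i hi; exact absurd i.isLt (by omega)
    | succ Nn ih =>
      intro i hi
      rcases le_or_gt (m - Nn) (i : ℕ) with h1 | h1
      · exact ih i h1
      have hΦ : (∑ j, g j • φ j) = 0 := by
        apply alt_eq_zero_of_vanish
        intro S hS
        have hgS := congrFun hg ⟨S, hS⟩
        rw [altMap_sum_apply]
        simpa [AlternatingMap.smul_apply, hψ] using hgS
      have hev := congrArg (fun (Φ : (Idx c → F) [⋀^Fin c]→ₗ[F] F) => Φ (Q i)) hΦ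
      simp only [AlternatingMap.zero_apply] at hev
      rw [altMap_sum_apply] at hev
      simp only [AlternatingMap.smul_apply] at hev
      rw [Finset.sum_eq_single i] at hev
      · rcases smul_eq_zero.mp hev with h | h
        · exact h
        · exact absurd h (hdiag' i)
      · intro j _ hj
        rcases lt_or_gt_of_ne hj with hlt | hgt
        · rw [hvanish i j hlt, smul_zero]
        · rw [ih j (by omega), zero_smul]
      · intro h; exact absurd (Finset.mem_univ i) h
  have hcard := hli.fintype_card_le_finrank
  rw [Fintype.card_fin, Module.finrank_pi, Fintype.card_finset_len, Fintype.card_sum,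
    Fintype.card_fin] at hcard
  have h2c : 2 * (k - t) = c + c := by omega
  rw [h2c]
  exact hcard

end ZFCore
end ZFCoreSection




open Finset

namespace ZFPaper

variable {V : Type*}

/-- Zero forcing propagation: `Forces G B v` means `v` eventually gets colored black
starting from the initially black set `B`. -/
inductive Forces (G : SimpleGraph V) (B : Set V) : V → Prop
  | init (v : V) : v ∈ B → Forces G B v
  | force (u v : V) : G.Adj u v → Forces G B u →
      (∀ w, G.Adj u w → w ≠ v → Forces G B w) → Forces G B v

/-- `B` is a zero forcing set of `G`. -/
def IsZeroForcingSet (G : SimpleGraph V) (B : Set V) : Prop := ∀ v, Forces G B v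

/-- The zero forcing number `Z(G)`. -/
noncomputable def zeroForcingNumber (G : SimpleGraph V) : ℕ :=
  sInf {m | ∃ B : Finset V, B.card = m ∧ IsZeroForcingSet G ↑B}

/-- The total zero forcing number `Z_t(G)`. -/
noncomputable def totalZeroForcingNumber (G : SimpleGraph V) : ℕ :=
  sInf {m | ∃ B : Finset V, B.card = m ∧ IsZeroForcingSet G ↑B ∧
    ∀ v ∈ B, ∃ u ∈ B, G.Adj v u}

/-- The connected zero forcing number `Z_c(G)`. -/
noncomputable def connectedZeroForcingNumber (G : SimpleGraph V) : ℕ :=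
  sInf {m | ∃ B : Finset V, B.card = m ∧ IsZeroForcingSet G ↑B ∧
    (G.induce (↑B : Set V)).Connected}

/-- The closed neighborhood of a vertex. -/
def closedNbhd (G : SimpleGraph V) (v : V) : Set V := G.neighborSet v ∪ {v}

/-- A Z-Grundy dominating sequence: each vertex has an open neighbor not yet dominated,
and at the end every vertex is dominated. -/
def IsZGrundySeq (G : SimpleGraph V) (l : List V) : Prop :=
  (∀ i : Fin l.length,
    ((G.neighborSet (l.get i)) \
      (⋃ j : Fin l.length, ⋃ _ : (j : ℕ) < (i : ℕ), closedNbhd G (l.get j))).Nonempty) ∧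
  ∀ v : V, ∃ i : Fin l.length, v ∈ closedNbhd G (l.get i)

/-- The Z-Grundy domination number `γ_gr^Z(G)`. -/
noncomputable def zGrundyNumber (G : SimpleGraph V) : ℕ :=
  sSup {m | ∃ l : List V, IsZGrundySeq G l ∧ l.length = m}

/-- The generalized Johnson graph `J_S(n,k)`. -/
def genJohnson (n k : ℕ) (S : Finset ℕ) :
    SimpleGraph {A : Finset (Fin n) // A.card = k} where
  Adj v w := v ≠ w ∧ (v.1 ∩ w.1).card ∈ S
  symm := ⟨by
    rintro v w ⟨h1, h2⟩
    exact ⟨h1.symm, by rwa [Finset.inter_comm]⟩⟩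
  loopless := ⟨by rintro v ⟨h1, -⟩; exact h1 rfl⟩

/-- The generalized Grassmann graph `J_{q,S}(n,k)` over a finite field `F` of order `q`. -/
def genGrassmann (F : Type*) [Field F] (n k : ℕ) (S : Finset ℕ) :
    SimpleGraph {W : Submodule F (Fin n → F) // Module.finrank F W = k} where
  Adj v w := v ≠ w ∧ Module.finrank F ↥(v.1 ⊓ w.1) ∈ S
  symm := ⟨by
    rintro v w ⟨h1, h2⟩
    exact ⟨h1.symm, by rwa [inf_comm w.1 v.1]⟩⟩
  loopless := ⟨by rintro v ⟨h1, -⟩; exact h1 rfl⟩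

/-- The Hamming graph `H(n,q)`. -/
def hammingGraph (n q : ℕ) : SimpleGraph (Fin n → Fin q) where
  Adj x y := hammingDist x y = 1
  symm := ⟨fun x y h => (hammingDist_comm y x).trans h⟩
  loopless := ⟨fun x h => by simp only [hammingDist_self] at h; exact absurd h (by norm_num)⟩




/-- the one-step forcing closure operator -/
def forceStep (G : SimpleGraph V) (S : Set V) : Set V :=
  S ∪ {v | ∃ u, G.Adj u v ∧ u ∈ S ∧ ∀ w, G.Adj u w → w ≠ v → w ∈ S}

lemma forces_iff_iterate [Fintype V] (G : SimpleGraph V) (B : Set V) (v : V)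
    (h : Forces G B v) : ∃ i : ℕ, v ∈ (forceStep G)^[i] B := by
  classical
  induction h with
  | init v hv => exact ⟨0, by simpa using hv⟩
  | force u v hadj hu hw ihu ihw =>
    have hmono : Monotone (fun i => (forceStep G)^[i] B) := by
      apply monotone_nat_of_le_succ
      intro i
      rw [Function.iterate_succ_apply']
      exact Set.subset_union_left
    set f : V → ℕ := fun x => if h : ∃ i, x ∈ (forceStep G)^[i] B then Nat.find h else 0 with hf
    have hfmem : ∀ x, (∃ i, x ∈ (forceStep G)^[i] B) → x ∈ (forceStep G)^[f x] B := by
      intro x hx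
      rw [hf]
      simp only [dif_pos hx]
      exact Nat.find_spec hx
    set I := Finset.univ.sup f with hI
    have hle : ∀ x, f x ≤ I := fun x => Finset.le_sup (Finset.mem_univ x)
    refine ⟨I + 1, ?_⟩
    rw [Function.iterate_succ_apply']
    right
    refine ⟨u, hadj, hmono (hle u) (hfmem u ihu), fun w hw1 hw2 => ?_⟩
    exact hmono (hle w) (hfmem w (ihw w hw1 hw2))

lemma get_append_left' (l : List V) (a : V) (m : ℕ) (hm : m < l.length)
    (hm' : m < (l ++ [a]).length) : (l ++ [a]).get ⟨m, hm'⟩ = l.get ⟨m, hm⟩ := by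
  rw [List.get_eq_getElem, List.get_eq_getElem]
  exact List.getElem_append_left hm

lemma get_append_last' (l : List V) (a : V) (hm : l.length < (l ++ [a]).length) :
    (l ++ [a]).get ⟨l.length, hm⟩ = a := by
  rw [List.get_eq_getElem, List.getElem_append_right] <;> simp

lemma get_map' (u : V → V) (l : List V) (i : ℕ) (h1 : i < (l.map u).length)
    (h2 : i < l.length) : (l.map u).get ⟨i, h1⟩ = u (l.get ⟨i, h2⟩) := by
  rw [List.get_eq_getElem, List.get_eq_getElem]
  simp

/-- From a zero forcing set, build a Z-Grundy dominating sequence of length at least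
`|V| - |B|`. -/
lemma exists_grundy_of_forcing [Fintype V] [DecidableEq V] (G : SimpleGraph V)
    (hiso : ∀ v : V, ∃ u, G.Adj v u) (B : Finset V) (hB : IsZeroForcingSet G ↑B) :
    ∃ l : List V, IsZGrundySeq G l ∧ Fintype.card V - B.card ≤ l.length := by
  classical
  -- rank function
  have hforce : ∀ v : V, ∃ i, v ∈ (forceStep G)^[i] ↑B :=
    fun v => forces_iff_iterate G ↑B v (hB v)
  set rnk : V → ℕ := fun v => Nat.find (hforce v) with hrnk
  have hrnk_spec : ∀ v, v ∈ (forceStep G)^[rnk v] ↑B := fun v => Nat.find_spec (hforce v)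
  have hrnk_min : ∀ v i, i < rnk v → v ∉ (forceStep G)^[i] ↑B :=
    fun v i hi => Nat.find_min (hforce v) hi
  have hrnk_le : ∀ v i, v ∈ (forceStep G)^[i] ↑B → rnk v ≤ i :=
    fun v i hi => Nat.find_le hi
  -- parents
  have hparent : ∀ v : V, v ∉ B → ∃ u, G.Adj u v ∧ rnk u < rnk v ∧
      (∀ x, G.Adj u x → x ≠ v → rnk x < rnk v) := by
    intro v hv
    have h0 : 0 < rnk v := by
      rcases Nat.eq_zero_or_pos (rnk v) with h | h
      · exfalso; apply hv
        have := hrnk_spec v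
        rw [h] at this
        simpa using this
      · exact h
    have hspec := hrnk_spec v
    have heq : rnk v = (rnk v - 1) + 1 := by omega
    rw [heq, Function.iterate_succ_apply'] at hspec
    rcases hspec with hmem | ⟨u, hadj, humem, hwmem⟩
    · exact absurd hmem (hrnk_min v _ (by omega))
    · have hru : rnk u ≤ rnk v - 1 := hrnk_le u _ humem
      refine ⟨u, hadj, by omega, fun x hx1 hx2 => ?_⟩
      have := hrnk_le x _ (hwmem x hx1 hx2)
      omega
  set u : V → V := fun v => if h : v ∉ B then (hparent v h).choose else v with hu
  have hu_adj : ∀ v, v ∉ B → G.Adj (u v) v := by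
    intro v hv
    rw [hu]; simp only [dif_pos hv]
    exact (hparent v hv).choose_spec.1
  have hu_lt : ∀ v, v ∉ B → rnk (u v) < rnk v := by
    intro v hv
    rw [hu]; simp only [dif_pos hv]
    exact (hparent v hv).choose_spec.2.1
  have hu_nbr : ∀ v, v ∉ B → ∀ x, G.Adj (u v) x → x ≠ v → rnk x < rnk v := by
    intro v hv
    rw [hu]; simp only [dif_pos hv]
    exact (hparent v hv).choose_spec.2.2
  -- base list sorted by rank
  set r : V → V → Prop := fun a b => rnk a ≤ rnk b with hr
  haveI : DecidableRel r := fun a b => by rw [hr]; exact inferInstance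
  haveI : IsTotal V r := ⟨fun a b => le_total _ _⟩
  haveI : IsTrans V r := ⟨fun a b c h1 h2 => le_trans h1 h2⟩
  set l0 : List V := List.insertionSort r ((Finset.univ \ B).toList) with hl0
  have hl0_perm : l0.Perm (Finset.univ \ B).toList := List.perm_insertionSort _ _
  have hl0_len : l0.length = Fintype.card V - B.card := by
    rw [hl0_perm.length_eq, Finset.length_toList, Finset.card_sdiff_of_subset (Finset.subset_univ B),
      Finset.card_univ]
  have hl0_nodup : l0.Nodup := hl0_perm.nodup_iff.mpr (Finset.nodup_toList _)
  have hl0_mem : ∀ x ∈ l0, x ∉ B := by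
    intro x hx
    have := hl0_perm.mem_iff.mp hx
    rw [Finset.mem_toList, Finset.mem_sdiff] at this
    exact this.2
  have hl0_sorted : l0.Pairwise r := List.pairwise_insertionSort r _
  -- the partial sequence
  have hl1_len : (l0.map u).length = l0.length := List.length_map _
  have hcond1 : ∀ i : Fin (l0.map u).length,
      ((G.neighborSet ((l0.map u).get i)) \
        (⋃ j : Fin (l0.map u).length, ⋃ _ : (j : ℕ) < (i : ℕ),
          closedNbhd G ((l0.map u).get j))).Nonempty := by
    intro i
    have hilt : (i : ℕ) < l0.length := by rw [← hl1_len]; exact i.isLt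
    have hvB : l0.get ⟨i, hilt⟩ ∉ B := hl0_mem _ (List.get_mem _ _)
    have hget : (l0.map u).get i = u (l0.get ⟨i, hilt⟩) := get_map' u l0 i i.isLt hilt
    refine ⟨l0.get ⟨i, hilt⟩, ?_, ?_⟩
    · rw [hget, SimpleGraph.mem_neighborSet]
      exact hu_adj _ hvB
    · intro hmem
      simp only [Set.mem_iUnion] at hmem
      obtain ⟨j, hji, hmem⟩ := hmem
      have hjlt : (j : ℕ) < l0.length := by rw [← hl1_len]; exact j.isLt
      have hv'B : l0.get ⟨j, hjlt⟩ ∉ B := hl0_mem _ (List.get_mem _ _)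
      have hgetj : (l0.map u).get j = u (l0.get ⟨j, hjlt⟩) := get_map' u l0 j j.isLt hjlt
      have hrle : rnk (l0.get ⟨j, hjlt⟩) ≤ rnk (l0.get ⟨i, hilt⟩) :=
        List.pairwise_iff_get.mp hl0_sorted ⟨j, hjlt⟩ ⟨i, hilt⟩ hji
      rw [hgetj] at hmem
      simp only [closedNbhd, Set.mem_union, Set.mem_singleton_iff,
        SimpleGraph.mem_neighborSet] at hmem
      rcases hmem with hnb | hsing
      · have hvne : l0.get ⟨i, hilt⟩ ≠ l0.get ⟨j, hjlt⟩ := by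
          intro h
          have h9 : (⟨(i:ℕ), hilt⟩ : Fin l0.length) = ⟨(j:ℕ), hjlt⟩ :=
            List.nodup_iff_injective_get.mp hl0_nodup h
          simp only [Fin.mk.injEq] at h9
          omega
        have := hu_nbr _ hv'B _ hnb hvne
        omega
      · have h1 := hu_lt _ hv'B
        rw [← hsing] at h1
        omega
  -- extension to a dominating sequence
  have hext : ∀ (N : ℕ) (l : List V),
      (∀ i : Fin l.length,
        ((G.neighborSet (l.get i)) \
          (⋃ j : Fin l.length, ⋃ _ : (j : ℕ) < (i : ℕ), closedNbhd G (l.get j))).Nonempty) →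
      {x : V | ∀ i : Fin l.length, x ∉ closedNbhd G (l.get i)}.ncard ≤ N →
      ∃ lf : List V, IsZGrundySeq G lf ∧ l.length ≤ lf.length := by
    intro N
    induction N with
    | zero =>
      intro l hcond hcard
      refine ⟨l, ⟨hcond, ?_⟩, le_refl _⟩
      intro x
      by_contra hx
      push_neg at hx
      have hxU : x ∈ {y : V | ∀ i : Fin l.length, y ∉ closedNbhd G (l.get i)} := hx
      have h0 : {y : V | ∀ i : Fin l.length, y ∉ closedNbhd G (l.get i)}.ncard = 0 := by omega
      rw [Set.ncard_eq_zero (Set.toFinite _)] at h0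
      rw [h0] at hxU
      exact hxU
    | succ N ih =>
      intro l hcond hcard
      by_cases hU : {y : V | ∀ i : Fin l.length, y ∉ closedNbhd G (l.get i)} = ∅
      · refine ⟨l, ⟨hcond, ?_⟩, le_refl _⟩
        intro x
        by_contra hx
        push_neg at hx
        have hxU : x ∈ {y : V | ∀ i : Fin l.length, y ∉ closedNbhd G (l.get i)} := hx
        rw [hU] at hxU
        exact hxU
      · obtain ⟨x, hx⟩ := Set.nonempty_iff_ne_empty.mpr hU
        obtain ⟨u', hu'⟩ := hiso x
        have hadj : G.Adj u' x := hu'.symm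
        have hlen' : (l ++ [u']).length = l.length + 1 := by simp
        have hget_lt : ∀ (m : ℕ) (hm : m < l.length) (hm' : m < (l ++ [u']).length),
            (l ++ [u']).get ⟨m, hm'⟩ = l.get ⟨m, hm⟩ := fun m hm hm' =>
          get_append_left' l u' m hm hm'
        have hget_last : ∀ (hm : l.length < (l ++ [u']).length),
            (l ++ [u']).get ⟨l.length, hm⟩ = u' := fun hm => get_append_last' l u' hm
        have hcond' : ∀ i : Fin (l ++ [u']).length,
            ((G.neighborSet ((l ++ [u']).get i)) \
              (⋃ j : Fin (l ++ [u']).length, ⋃ _ : (j : ℕ) < (i : ℕ),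
                closedNbhd G ((l ++ [u']).get j))).Nonempty := by
          intro i
          rcases lt_or_ge (i : ℕ) l.length with hi | hi
          · obtain ⟨y, hy1, hy2⟩ := hcond ⟨i, hi⟩
            refine ⟨y, ?_, ?_⟩
            · have h2 := hget_lt i hi i.isLt
              rw [show (⟨(i:ℕ), i.isLt⟩ : Fin (l ++ [u']).length) = i from rfl] at h2
              rw [h2]
              exact hy1
            · intro hmem
              apply hy2
              simp only [Set.mem_iUnion] at hmem ⊢
              obtain ⟨j, hji, hmem⟩ := hmem
              have hjlt : (j : ℕ) < l.length := by omega
              refine ⟨⟨j, hjlt⟩, hji, ?_⟩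
              rwa [hget_lt j hjlt j.isLt] at hmem
          · -- last position
            have hieq : (i : ℕ) = l.length := by
              have h5 := i.isLt
              omega
            refine ⟨x, ?_, ?_⟩
            · have h2 : (l ++ [u']).get i = u' := by
                rw [show i = (⟨l.length, by omega⟩ : Fin (l ++ [u']).length) from
                  Fin.ext (by rw [hieq])]
                exact hget_last _
              rw [h2, SimpleGraph.mem_neighborSet]
              exact hadj
            · intro hmem
              simp only [Set.mem_iUnion] at hmem
              obtain ⟨j, hji, hmem⟩ := hmem
              have hjlt : (j : ℕ) < l.length := by omega
              apply hx ⟨j, hjlt⟩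
              rwa [hget_lt j hjlt j.isLt] at hmem
        have hsub : {y : V | ∀ i : Fin (l ++ [u']).length, y ∉ closedNbhd G ((l ++ [u']).get i)} ⊆
            {y : V | ∀ i : Fin l.length, y ∉ closedNbhd G (l.get i)} \ {x} := by
          intro y hy
          constructor
          · intro i
            have h2 := hy ⟨i, by omega⟩
            rwa [hget_lt i i.isLt (by omega)] at h2
          · intro hyx
            simp only [Set.mem_singleton_iff] at hyx
            subst hyx
            apply hy ⟨l.length, by omega⟩
            rw [hget_last (by omega)]
            left
            rw [SimpleGraph.mem_neighborSet]
            exact hadj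
        obtain ⟨l'', hl''1, hl''2⟩ := ih (l ++ [u']) hcond' (by
          have h1 : ({y : V | ∀ i : Fin (l ++ [u']).length, y ∉ closedNbhd G ((l ++ [u']).get i)}).ncard
              ≤ ({y : V | ∀ i : Fin l.length, y ∉ closedNbhd G (l.get i)} \ {x}).ncard :=
            Set.ncard_le_ncard hsub (Set.toFinite _)
          have h2 : ({y : V | ∀ i : Fin l.length, y ∉ closedNbhd G (l.get i)} \ {x}).ncard
              = {y : V | ∀ i : Fin l.length, y ∉ closedNbhd G (l.get i)}.ncard - 1 :=
            Set.ncard_diff_singleton_of_mem hx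
          have h3 : 0 < {y : V | ∀ i : Fin l.length, y ∉ closedNbhd G (l.get i)}.ncard :=
            (Set.ncard_pos (Set.toFinite _)).mpr ⟨x, hx⟩
          omega)
        refine ⟨l'', hl''1, ?_⟩
        rw [hlen'] at hl''2
        omega
  obtain ⟨lf, hlf1, hlf2⟩ := hext (Fintype.card V) (l0.map u) hcond1 (by
    have := Set.ncard_le_ncard
      (Set.subset_univ {x : V | ∀ i : Fin (l0.map u).length, x ∉ closedNbhd G ((l0.map u).get i)})
      (Set.toFinite _)
    rwa [Set.ncard_univ, Nat.card_eq_fintype_card] at this)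
  refine ⟨lf, hlf1, ?_⟩
  rw [hl1_len, hl0_len] at hlf2
  omega


/-- lower bound for generalized Kneser graphs via Z-Grundy domination. -/
theorem genKneser_zf_lower (n k t : ℕ) (ht : t ≤ k - 1) (hk : 1 ≤ k) (hn : 2 * k + 1 ≤ n) :
    zGrundyNumber (genJohnson n k (Finset.range (t + 1))) ≤ (2 * k - 2 * t).choose (k - t) ∧
    n.choose k - (2 * k - 2 * t).choose (k - t) ≤
      zeroForcingNumber (genJohnson n k (Finset.range (t + 1))) := by
  classical
  have htk : t < k := by omega
  set G := genJohnson n k (Finset.range (t + 1)) with hG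
  -- every Z-Grundy sequence is short, by the skew Bollobás-type inequality
  have hbound : ∀ l : List {A : Finset (Fin n) // A.card = k}, IsZGrundySeq G l →
      l.length ≤ (2 * k - 2 * t).choose (k - t) := by
    intro l hl
    obtain ⟨h1, -⟩ := hl
    choose w hw using h1
    have hchoose : (2 * k - 2 * t) = 2 * (k - t) := by omega
    rw [hchoose]
    apply ZFCore.skewBollobas htk (fun i => (l.get i).1) (fun i => (w i).1)
      (fun i => (l.get i).2) (fun i => (w i).2)
    · -- diagonal: adjacency gives small intersection
      intro i
      have hadj : G.Adj (l.get i) (w i) := (hw i).1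
      obtain ⟨-, hmem⟩ := hadj
      have := Finset.mem_range.mp hmem
      omega
    · -- skew condition: the witness is undominated
      intro i j hij
      have hnot : w j ∉ closedNbhd G (l.get i) := by
        intro hmem
        exact (hw j).2 (Set.mem_iUnion.mpr ⟨i, Set.mem_iUnion.mpr ⟨hij, hmem⟩⟩)
      have hne2 : w j ≠ l.get i := fun h => hnot (Or.inr (by simp [h]))
      have hnadj : ¬ G.Adj (l.get i) (w j) := fun h => hnot (Or.inl h)
      by_contra hcon
      push_neg at hcon
      exact hnadj ⟨fun h => hne2 h.symm, Finset.mem_range.mpr (by omega)⟩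
  constructor
  · rcases Set.eq_empty_or_nonempty
        {m | ∃ l : List {A : Finset (Fin n) // A.card = k}, IsZGrundySeq G l ∧ l.length = m}
        with he | hne
    · rw [zGrundyNumber, he, csSup_empty]
      exact Nat.zero_le _
    · apply csSup_le hne
      rintro m ⟨l, hl, rfl⟩
      exact hbound l hl
  · have hVcard : Fintype.card {A : Finset (Fin n) // A.card = k} = n.choose k := by
      rw [Fintype.card_finset_len, Fintype.card_fin]
    have hiso : ∀ v : {A : Finset (Fin n) // A.card = k}, ∃ u, G.Adj v u := by
      intro v
      have hcompl : k ≤ (Finset.univ \ v.1).card := by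
        rw [Finset.card_sdiff_of_subset (Finset.subset_univ _), Finset.card_univ, Fintype.card_fin, v.2]
        omega
      obtain ⟨Bs, hBs, hBsc⟩ := Finset.exists_subset_card_eq hcompl
      have hdisj : Disjoint v.1 Bs := Finset.disjoint_left.mpr
        (fun a ha hab => (Finset.mem_sdiff.mp (hBs hab)).2 ha)
      refine ⟨⟨Bs, hBsc⟩, ?_, ?_⟩
      · intro h
        have hveq : v.1 = Bs := by rw [h]
        have hempty : v.1 = ∅ := by
          rw [← Finset.disjoint_self_iff_empty]
          rw [hveq] at hdisj ⊢
          exact hdisj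
        have := v.2
        rw [hempty] at this
        simp at this
        omega
      · have h0 : v.1 ∩ Bs = ∅ := Finset.disjoint_iff_inter_eq_empty.mp hdisj
        show (v.1 ∩ Bs).card ∈ Finset.range (t + 1)
        rw [h0]
        simp
    have hSne : {m | ∃ B : Finset {A : Finset (Fin n) // A.card = k},
        B.card = m ∧ IsZeroForcingSet G ↑B}.Nonempty :=
      ⟨(Finset.univ : Finset {A : Finset (Fin n) // A.card = k}).card,
        Finset.univ, rfl, fun v => Forces.init v (by simp)⟩
    obtain ⟨B, hBcard, hBforce⟩ := Nat.sInf_mem hSne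
    obtain ⟨l, hl1, hl2⟩ := exists_grundy_of_forcing G hiso B hBforce
    have hlb := hbound l hl1
    rw [hVcard] at hl2
    rw [zeroForcingNumber, ← hBcard]
    omega


end ZFPaper
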